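/- arXiv:1705.10770 — 2 statements merged into one kernel-verified Lean document; each statement's English description precedes it below -/
import Mathlib

section
/- (Invariance of non-addability under a sequence of backward removals; core of the proofs of Theorems 1 and 2.) Let (V_i)_{i ∈ ι} be a finite family of random variables on a standard Borel probability space and T a random variable. Let S₀ ⊆ ι satisfy: for every r ∈ ι \ S₀, T is conditionally independent of V_r given (V_j)_{j ∈ S₀}. Let S₀ ⊋ S₁ ⊋ … ⊋ S_k be a sequence of subsets such that for each m < k, S_{m+1} = S_m \ {s_m} for some s_m ∈ S_m with T conditionally independent of V_{s_m} given (V_j)_{j ∈ S_m \ {s_m}}. Then for every r ∈ ι \ S_k, T is conditionally independent of V_r given (V_j)_{j ∈ S_k}. -/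
open ProbabilityTheory MeasureTheory

/-- The σ-algebra generated jointly by the variables `V j`, `j ∈ B`. -/
def famAlg {Ω ι : Type*} (V : ι → Ω → ℝ) (B : Set ι) : MeasurableSpace Ω :=
  ⨆ j ∈ B, MeasurableSpace.comap (V j) inferInstance

theorem famAlg_le {Ω ι : Type*} {mΩ : MeasurableSpace Ω} {V : ι → Ω → ℝ}
    (hV : ∀ i, Measurable (V i)) (B : Set ι) : famAlg V B ≤ mΩ :=
  iSup₂_le fun j _ => (hV j).comap_le

/-- `T ⫫ V i | (V_j)_{j ∈ B}`: the σ-algebra generated by `T` is conditionally independent of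
the σ-algebra generated by `V i` given the σ-algebra generated jointly by `(V_j)_{j ∈ B}`. -/
def CondIndepVarFam {Ω ι : Type*} {mΩ : MeasurableSpace Ω} [StandardBorelSpace Ω]
    (μ : Measure Ω) [IsFiniteMeasure μ] (T : Ω → ℝ) (V : ι → Ω → ℝ)
    (hV : ∀ i, Measurable (V i)) (i : ι) (B : Set ι) : Prop :=
  CondIndep (famAlg V B) (MeasurableSpace.comap T inferInstance)
    (MeasurableSpace.comap (V i) inferInstance) (famAlg_le hV B) μ

/-!
Removing `a` from `S` is an instance of the *contraction* property of conditional independence: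
`T ⫫ V_a | S \ {a}` and `T ⫫ V_r | S` give `T ⫫ (V_a, V_r) | S \ {a}`, hence `T ⫫ V_r | S \ {a}`;
the theorem follows by induction along the removals. Contraction in turn comes from the
characterisation of `m₁ ⫫ m₂ | m'` as `μ⟦A | m' ⊔ m₂⟧ = μ⟦A | m'⟧` a.e. for every `A ∈ m₁`,
whose forward direction is an equality of set integrals checked on the π-system of sets `B ∩ F`.
-/

open Set

theorem IsPiSystem.image2_inter {α : Type*} {C D : Set (Set α)} (hC : IsPiSystem C)
    (hD : IsPiSystem D) : IsPiSystem (image2 (· ∩ ·) C D) := by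
  rintro _ ⟨s₁, hs₁, t₁, ht₁, rfl⟩ _ ⟨s₂, hs₂, t₂, ht₂, rfl⟩ hne
  rw [inter_inter_inter_comm] at hne ⊢
  exact mem_image2_of_mem (hC _ hs₁ _ hs₂ hne.left) (hD _ ht₁ _ ht₂ hne.right)

theorem MeasurableSpace.sup_eq_generateFrom_image2_inter {α : Type*}
    (m₁ m₂ : MeasurableSpace α) :
    m₁ ⊔ m₂ =
      generateFrom (image2 (· ∩ ·) {s | MeasurableSet[m₁] s} {t | MeasurableSet[m₂] t}) := by
  refine le_antisymm (sup_le ?_ ?_) (generateFrom_le ?_)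
  · exact fun s hs => measurableSet_generateFrom ⟨s, hs, univ, .univ, inter_univ s⟩
  · exact fun t ht => measurableSet_generateFrom ⟨univ, .univ, t, ht, univ_inter t⟩
  · rintro _ ⟨s, hs, t, ht, rfl⟩
    exact (le_sup_left (a := m₁) _ hs).inter (le_sup_right (a := m₁) _ ht)

theorem setIntegral_eq_setIntegral_of_isPiSystem {α : Type*} {m m₀ : MeasurableSpace α}
    {μ : Measure α} (hm : m ≤ m₀) {C : Set (Set α)} (h_gen : m = MeasurableSpace.generateFrom C)
    (hC : IsPiSystem C) {f g : α → ℝ} (hf : Integrable f μ) (hg : Integrable g μ)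
    (h_univ : ∫ x, f x ∂μ = ∫ x, g x ∂μ) (h_eq : ∀ s ∈ C, ∫ x in s, f x ∂μ = ∫ x in s, g x ∂μ)
    {s : Set α} (hs : MeasurableSet[m] s) : ∫ x in s, f x ∂μ = ∫ x in s, g x ∂μ := by
  have h_apply : ∀ t, MeasurableSet[m] t →
      ((μ.withDensityᵥ f).trim hm t = ∫ x in t, f x ∂μ ∧
        (μ.withDensityᵥ g).trim hm t = ∫ x in t, g x ∂μ) := fun t ht => by
    simp only [VectorMeasure.trim_measurableSet_eq hm ht, withDensityᵥ_apply hf (hm t ht),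
      withDensityᵥ_apply hg (hm t ht), and_self]
  have h_trim : (μ.withDensityᵥ f).trim hm = (μ.withDensityᵥ g).trim hm := by
    refine VectorMeasure.ext_of_generateFrom C (fun t ht => ?_) h_gen hC ?_
    · have ht' : MeasurableSet[m] t := h_gen ▸ MeasurableSpace.measurableSet_generateFrom ht
      rw [(h_apply t ht').1, (h_apply t ht').2, h_eq t ht]
    · rw [(h_apply univ .univ).1, (h_apply univ .univ).2, setIntegral_univ, setIntegral_univ,
        h_univ]
  rw [← (h_apply s hs).1, ← (h_apply s hs).2, h_trim]

theorem Set.indicator_one_mul {α M₀ : Type*} [MulZeroOneClass M₀] (s : Set α) (f : α → M₀) :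
    s.indicator (fun _ => 1) * f = s.indicator f := by
  ext x
  by_cases hx : x ∈ s <;> simp [hx]

namespace ProbabilityTheory

variable {Ω : Type*} {m' m₁ m₂ m₃ mΩ : MeasurableSpace Ω} [StandardBorelSpace Ω]
  {μ : Measure Ω} [IsFiniteMeasure μ]

theorem CondIndep.condExp_indicator_sup_ae_eq (hm' : m' ≤ mΩ) (hm₁ : m₁ ≤ mΩ) (hm₂ : m₂ ≤ mΩ)
    (h : CondIndep m' m₁ m₂ hm' μ) {A : Set Ω} (hA : MeasurableSet[m₁] A) :
    μ⟦A | m' ⊔ m₂⟧ =ᵐ[μ] μ⟦A | m'⟧ := by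
  have hA_int : Integrable (A.indicator fun _ => (1 : ℝ)) μ :=
    (integrable_const 1).indicator (hm₁ A hA)
  have hmeas : AEStronglyMeasurable[m' ⊔ m₂] (μ⟦A | m'⟧) μ :=
    (stronglyMeasurable_condExp.mono (le_sup_left : m' ≤ m' ⊔ m₂)).aestronglyMeasurable
  refine (ae_eq_condExp_of_forall_setIntegral_eq (sup_le hm' hm₂) hA_int
    (fun _ _ _ => integrable_condExp.integrableOn) (fun t ht _ => ?_) hmeas).symm
  refine setIntegral_eq_setIntegral_of_isPiSystem (sup_le hm' hm₂)
    (MeasurableSpace.sup_eq_generateFrom_image2_inter m' m₂)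
    (m'.isPiSystem_measurableSet.image2_inter m₂.isPiSystem_measurableSet)
    integrable_condExp hA_int (integral_condExp hm') ?_ ht
  rintro _ ⟨B, hB, F, hF, rfl⟩
  have hF_int : Integrable (F.indicator fun _ => (1 : ℝ)) μ :=
    (integrable_const 1).indicator (hm₂ F hF)
  have hAF_int : Integrable ((A ∩ F).indicator fun _ => (1 : ℝ)) μ :=
    (integrable_const 1).indicator ((hm₁ A hA).inter (hm₂ F hF))
  have hF_mul_int : Integrable ((F.indicator fun _ => (1 : ℝ)) * μ⟦A | m'⟧) μ :=
    (F.indicator_one_mul (μ⟦A | m'⟧)).symm ▸ integrable_condExp.indicator (hm₂ F hF)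
  have h_pull :
      μ[(F.indicator fun _ => (1 : ℝ)) * μ⟦A | m'⟧ | m'] =ᵐ[μ] μ⟦F | m'⟧ * μ⟦A | m'⟧ :=
    condExp_mul_of_stronglyMeasurable_right stronglyMeasurable_condExp hF_mul_int hF_int
  have h_prod : μ⟦A ∩ F | m'⟧ =ᵐ[μ] μ⟦F | m'⟧ * μ⟦A | m'⟧ :=
    ((condIndep_iff m' m₁ m₂ hm' hm₁ hm₂ μ).mp h A F hA hF).trans (by rw [mul_comm])
  calc ∫ x in B ∩ F, (μ⟦A | m'⟧) x ∂μ
      = ∫ x in B, ((F.indicator fun _ => (1 : ℝ)) * μ⟦A | m'⟧) x ∂μ := by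
        rw [F.indicator_one_mul, setIntegral_indicator (hm₂ F hF)]
    _ = ∫ x in B, (μ⟦F | m'⟧ * μ⟦A | m'⟧) x ∂μ := by
        rw [← setIntegral_condExp hm' hF_mul_int hB]
        exact setIntegral_congr_ae (hm' B hB) (h_pull.mono fun x hx _ => hx)
    _ = ∫ x in B, (μ⟦A ∩ F | m'⟧) x ∂μ :=
        setIntegral_congr_ae (hm' B hB) (h_prod.mono fun x hx _ => hx.symm)
    _ = ∫ x in B ∩ F, A.indicator (fun _ => (1 : ℝ)) x ∂μ := by
        rw [setIntegral_condExp hm' hAF_int hB, ← setIntegral_indicator (hm₂ F hF),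
          indicator_indicator, inter_comm]

theorem condIndep_of_condExp_indicator_sup_ae_eq (hm' : m' ≤ mΩ) (hm₁ : m₁ ≤ mΩ)
    (hm₂ : m₂ ≤ mΩ) (h : ∀ A, MeasurableSet[m₁] A → μ⟦A | m' ⊔ m₂⟧ =ᵐ[μ] μ⟦A | m'⟧) :
    CondIndep m' m₁ m₂ hm' μ := by
  refine (condIndep_iff m' m₁ m₂ hm' hm₁ hm₂ μ).mpr fun t₁ t₂ ht₁ ht₂ => ?_
  set f₁ := t₁.indicator fun _ => (1 : ℝ)
  set f₂ := t₂.indicator fun _ => (1 : ℝ)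
  have hf₁_int : Integrable f₁ μ := (integrable_const 1).indicator (hm₁ t₁ ht₁)
  have hf₂_int : Integrable f₂ μ := (integrable_const 1).indicator (hm₂ t₂ ht₂)
  have h_inter : (t₁ ∩ t₂).indicator (fun _ => (1 : ℝ)) = f₂ * f₁ := by
    rw [inter_comm]
    exact inter_indicator_one
  have h_inter_int : Integrable (f₂ * f₁) μ :=
    h_inter ▸ (integrable_const 1).indicator ((hm₁ t₁ ht₁).inter (hm₂ t₂ ht₂))
  have hf₂_meas : StronglyMeasurable[m' ⊔ m₂] f₂ :=
    stronglyMeasurable_const.indicator (le_sup_right (a := m') t₂ ht₂)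
  have h_mul_int : Integrable (f₂ * μ⟦t₁ | m'⟧) μ :=
    (t₂.indicator_one_mul (μ⟦t₁ | m'⟧)).symm ▸ integrable_condExp.indicator (hm₂ t₂ ht₂)
  calc μ⟦t₁ ∩ t₂ | m'⟧
      = μ[f₂ * f₁ | m'] := by rw [h_inter]
    _ =ᵐ[μ] μ[μ[f₂ * f₁ | m' ⊔ m₂] | m'] :=
        (condExp_condExp_of_le le_sup_left (sup_le hm' hm₂)).symm
    _ =ᵐ[μ] μ[f₂ * μ⟦t₁ | m'⟧ | m'] :=
        condExp_congr_ae ((condExp_mul_of_stronglyMeasurable_left hf₂_meas h_inter_int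
          hf₁_int).trans (Filter.EventuallyEq.rfl.mul (h t₁ ht₁)))
    _ =ᵐ[μ] μ⟦t₂ | m'⟧ * μ⟦t₁ | m'⟧ :=
        condExp_mul_of_stronglyMeasurable_right stronglyMeasurable_condExp h_mul_int hf₂_int
    _ = μ⟦t₁ | m'⟧ * μ⟦t₂ | m'⟧ := mul_comm _ _

theorem CondIndep.contraction (hm' : m' ≤ mΩ) (hm₁ : m₁ ≤ mΩ) (hm₂ : m₂ ≤ mΩ)
    (hm₃ : m₃ ≤ mΩ) (h₂ : CondIndep m' m₁ m₂ hm' μ)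
    (h₃ : CondIndep (m' ⊔ m₂) m₁ m₃ (sup_le hm' hm₂) μ) :
    CondIndep m' m₁ (m₂ ⊔ m₃) hm' μ :=
  condIndep_of_condExp_indicator_sup_ae_eq hm' hm₁ (sup_le hm₂ hm₃) fun A hA => by
    rw [← sup_assoc]
    exact (h₃.condExp_indicator_sup_ae_eq _ hm₁ hm₃ hA).trans
      (h₂.condExp_indicator_sup_ae_eq hm' hm₁ hm₂ hA)

end ProbabilityTheory

theorem famAlg_eq_diff_singleton_sup {Ω ι : Type*} (V : ι → Ω → ℝ) {S : Set ι} {a : ι}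
    (ha : a ∈ S) :
    famAlg V S = famAlg V (S \ {a}) ⊔ MeasurableSpace.comap (V a) inferInstance := by
  conv_lhs => rw [← insert_sdiff_self_of_mem ha]
  rw [famAlg, iSup_insert, sup_comm]
  rfl

theorem CondIndepVarFam.diff_singleton {Ω ι : Type*} {mΩ : MeasurableSpace Ω}
    [StandardBorelSpace Ω] {μ : Measure Ω} [IsFiniteMeasure μ] {T : Ω → ℝ} {V : ι → Ω → ℝ}
    (hT : Measurable T) (hV : ∀ i, Measurable (V i)) {S : Set ι} {a : ι}
    (hS : ∀ r ∉ S, CondIndepVarFam μ T V hV r S) (ha : CondIndepVarFam μ T V hV a (S \ {a})) :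
    ∀ r ∉ S \ {a}, CondIndepVarFam μ T V hV r (S \ {a}) := by
  intro r hr
  by_cases haS : a ∈ S
  swap
  · rw [sdiff_singleton_eq_self haS] at hr ⊢
    exact hS r hr
  obtain rfl | hra := eq_or_ne r a
  · exact ha
  have hr_sup : CondIndep (famAlg V (S \ {a}) ⊔ MeasurableSpace.comap (V a) inferInstance)
      (MeasurableSpace.comap T inferInstance) (MeasurableSpace.comap (V r) inferInstance)
      (sup_le (famAlg_le hV _) (hV a).comap_le) μ := by
    have hr_S := hS r fun hrS => hr ⟨hrS, hra⟩
    unfold CondIndepVarFam at hr_S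
    convert hr_S using 1
    exact (famAlg_eq_diff_singleton_sup V haS).symm
  exact condIndep_of_condIndep_of_le_right
    (ha.contraction (famAlg_le hV _) hT.comap_le (hV a).comap_le (hV r).comap_le hr_sup)
    le_sup_right

theorem backward_removals_invariance_general {Ω ι : Type*} {mΩ : MeasurableSpace Ω}
    [StandardBorelSpace Ω] (μ : Measure Ω) [IsProbabilityMeasure μ]
    (T : Ω → ℝ) (V : ι → Ω → ℝ) (hT : Measurable T) (hV : ∀ i, Measurable (V i))
    (k : ℕ) (S : ℕ → Set ι) (s : ℕ → ι)
    (h0 : ∀ r ∈ Set.univ \ S 0, CondIndepVarFam μ T V hV r (S 0))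
    (hstep : ∀ m < k, S (m + 1) = S m \ {s m})
    (hind : ∀ m < k, CondIndepVarFam μ T V hV (s m) (S m \ {s m})) :
    ∀ r ∈ Set.univ \ S k, CondIndepVarFam μ T V hV r (S k) := by
  induction k with
  | zero => exact h0
  | succ n ih =>
    have h_prev := ih (fun m hm => hstep m (hm.trans n.lt_succ_self))
      (fun m hm => hind m (hm.trans n.lt_succ_self))
    rw [hstep n n.lt_succ_self]
    exact fun r hr => (CondIndepVarFam.diff_singleton hT hV (fun r hr => h_prev r ⟨trivial, hr⟩)
      (hind n n.lt_succ_self)) r hr.2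

/-- Invariance of non-addability under a sequence of backward removals. -/
theorem backward_removals_invariance {Ω ι : Type*} {mΩ : MeasurableSpace Ω}
    [StandardBorelSpace Ω] [Fintype ι] (μ : Measure Ω) [IsProbabilityMeasure μ]
    (T : Ω → ℝ) (V : ι → Ω → ℝ) (hT : Measurable T) (hV : ∀ i, Measurable (V i))
    (k : ℕ) (S : ℕ → Set ι) (s : ℕ → ι)
    (h0 : ∀ r ∈ Set.univ \ S 0, CondIndepVarFam μ T V hV r (S 0))
    (hmem : ∀ m < k, s m ∈ S m)
    (hstep : ∀ m < k, S (m + 1) = S m \ {s m})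
    (hind : ∀ m < k, CondIndepVarFam μ T V hV (s m) (S m \ {s m})) :
    ∀ r ∈ Set.univ \ S k, CondIndepVarFam μ T V hV r (S k) :=
  backward_removals_invariance_general (mΩ := mΩ) μ T V hT hV k S s h0 hstep hind
end

section
/- (Removability of all non-Markov-blanket variables during the backward phase; claim in the proofs of Theorems 3 and 4.) Let (V_i)_{i ∈ ι} be a finite family of random variables on a standard Borel probability space and T a random variable. Let M ⊆ S ⊆ ι be such that T is conditionally independent of the family (V_i)_{i ∈ S \ M} given (V_j)_{j ∈ M}. Then for every set W with M ⊆ W ⊆ S and every x ∈ W \ M, T is conditionally independent of V_x given (V_j)_{j ∈ W \ {x}}. In particular, backward elimination started from S can successively remove every index of S \ M: for any enumeration x_1, …, x_k of S \ M, writing S_m = S \ {x_1, …, x_{m-1}}, each removal satisfies the backward criterion that T is conditionally independent of V_{x_m} given (V_j)_{j ∈ S_m \ {x_m}}. -/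
open ProbabilityTheory MeasureTheory

/-- `T ⫫ (V_i)_{i ∈ A} | (V_j)_{j ∈ B}`. -/
def CondIndepSetFam {Ω ι : Type*} {mΩ : MeasurableSpace Ω} [StandardBorelSpace Ω]
    (μ : Measure Ω) [IsFiniteMeasure μ] (T : Ω → ℝ) (V : ι → Ω → ℝ)
    (hV : ∀ i, Measurable (V i)) (A B : Set ι) : Prop :=
  CondIndep (famAlg V B) (MeasurableSpace.comap T inferInstance)
    (famAlg V A) (famAlg_le hV B) μ

/-!
The claim is an instance of the weak union property of conditional independence: if
`m₁ ⫫ m₂ | m'`, then `m₁ ⫫ m₂ | n` for every `n` between `m'` and `m' ⊔ m₂`. Conditional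
independence makes `P[t₁ | m']` integrate like `1_{t₁}` over every `u ∩ t₂` with `u ∈ m'`,
`t₂ ∈ m₂`; these sets form a π-system generating `m' ⊔ m₂`, so `P[t₁ | m' ⊔ m₂] = P[t₁ | m']`,
and the factorisation over `n` follows from the tower property. For `M ⊆ W ⊆ S` and `x ∈ W \ M`,
the σ-algebra of `W \ {x}` lies between that of `M` and that of `M ∪ (S \ M)`, while `V x` is
one of the variables of `S \ M`.
-/

namespace MeasurableSpace

variable {Ω : Type*}

lemma sup_eq_generateFrom_image2_inter_s9 (m₁ m₂ : MeasurableSpace Ω) :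
    m₁ ⊔ m₂ = generateFrom
      (Set.image2 (· ∩ ·) {s | MeasurableSet[m₁] s} {t | MeasurableSet[m₂] t}) := by
  refine le_antisymm (sup_le (fun s hs => ?_) (fun t ht => ?_)) (generateFrom_le ?_)
  · exact measurableSet_generateFrom ⟨s, hs, Set.univ, MeasurableSet.univ, Set.inter_univ s⟩
  · exact measurableSet_generateFrom ⟨Set.univ, MeasurableSet.univ, t, ht, Set.univ_inter t⟩
  · rintro _ ⟨s, hs, t, ht, rfl⟩
    exact (le_sup_left (b := m₂) s hs).inter (le_sup_right (a := m₁) t ht)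

lemma isPiSystem_image2_inter (m₁ m₂ : MeasurableSpace Ω) :
    IsPiSystem (Set.image2 (· ∩ ·) {s | MeasurableSet[m₁] s} {t | MeasurableSet[m₂] t}) := by
  rintro _ ⟨s₁, hs₁, t₁, ht₁, rfl⟩ _ ⟨s₂, hs₂, t₂, ht₂, rfl⟩ -
  exact ⟨s₁ ∩ s₂, hs₁.inter hs₂, t₁ ∩ t₂, ht₁.inter ht₂, Set.inter_inter_inter_comm _ _ _ _⟩

end MeasurableSpace

namespace MeasureTheory

variable {Ω : Type*} {m mΩ : MeasurableSpace Ω} {μ : Measure Ω}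

theorem setIntegral_eq_of_isPiSystem {s : Set (Set Ω)} (hm : m ≤ mΩ)
    (h_eq : m = MeasurableSpace.generateFrom s) (h_inter : IsPiSystem s) {f g : Ω → ℝ}
    (hf : Integrable f μ) (hg : Integrable g μ)
    (basic : ∀ t ∈ s, ∫ x in t, f x ∂μ = ∫ x in t, g x ∂μ)
    (h_univ : ∫ x, f x ∂μ = ∫ x, g x ∂μ) {t : Set Ω} (ht : MeasurableSet[m] t) :
    ∫ x in t, f x ∂μ = ∫ x in t, g x ∂μ := by
  induction t, ht using MeasurableSpace.induction_on_inter h_eq h_inter with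
  | empty => simp
  | basic t ht => exact basic t ht
  | compl t ht h_eq_t =>
    have hf' := integral_add_compl (hm t ht) hf
    have hg' := integral_add_compl (hm t ht) hg
    linarith
  | iUnion t htd htm h_eq_t =>
    rw [integral_iUnion (fun i => hm _ (htm i)) htd hf.integrableOn,
      integral_iUnion (fun i => hm _ (htm i)) htd hg.integrableOn]
    exact tsum_congr h_eq_t

lemma condExp_indicator_eq_mul_condExp_indicator_one [IsFiniteMeasure μ] {g : Ω → ℝ}
    (hg : StronglyMeasurable[m] g) (hg_int : Integrable g μ) {t : Set Ω}
    (ht : MeasurableSet t) : μ[t.indicator g | m] =ᵐ[μ] g * μ⟦t | m⟧ := by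
  have h_mul : t.indicator g = g * t.indicator 1 := by
    ext x; by_cases hx : x ∈ t <;> simp [hx]
  rw [h_mul]
  refine condExp_mul_of_stronglyMeasurable_left hg ?_ ((integrable_const 1).indicator ht)
  rw [← h_mul]
  exact hg_int.indicator ht

end MeasureTheory

namespace ProbabilityTheory.CondIndep

variable {Ω : Type*} {m' m₁ m₂ mΩ : MeasurableSpace Ω} [StandardBorelSpace Ω]
  {μ : Measure Ω} [IsFiniteMeasure μ] {hm' : m' ≤ mΩ}

lemma setIntegral_inter_condExp_indicator (h : CondIndep m' m₁ m₂ hm' μ) (hm₁ : m₁ ≤ mΩ)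
    (hm₂ : m₂ ≤ mΩ) {t₁ u t₂ : Set Ω} (ht₁ : MeasurableSet[m₁] t₁) (hu : MeasurableSet[m'] u)
    (ht₂ : MeasurableSet[m₂] t₂) :
    ∫ x in u ∩ t₂, (μ⟦t₁ | m'⟧) x ∂μ = ∫ x in u ∩ t₂, t₁.indicator (fun _ => 1) x ∂μ := by
  have ht₂' : MeasurableSet t₂ := hm₂ _ ht₂
  have h_prod : μ⟦t₁ ∩ t₂ | m'⟧ =ᵐ[μ] μ⟦t₁ | m'⟧ * μ⟦t₂ | m'⟧ :=
    (condIndep_iff m' m₁ m₂ hm' hm₁ hm₂ μ).mp h t₁ t₂ ht₁ ht₂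
  calc ∫ x in u ∩ t₂, (μ⟦t₁ | m'⟧) x ∂μ
      = ∫ x in u, t₂.indicator (μ⟦t₁ | m'⟧) x ∂μ := (setIntegral_indicator ht₂').symm
    _ = ∫ x in u, (μ[t₂.indicator (μ⟦t₁ | m'⟧) | m']) x ∂μ :=
        (setIntegral_condExp hm' (integrable_condExp.indicator ht₂') hu).symm
    _ = ∫ x in u, (μ⟦t₁ ∩ t₂ | m'⟧) x ∂μ := integral_congr_ae <| ae_restrict_of_ae <|
        (condExp_indicator_eq_mul_condExp_indicator_one stronglyMeasurable_condExp
          integrable_condExp ht₂').trans h_prod.symm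
    _ = ∫ x in u, (t₁ ∩ t₂).indicator (fun _ => 1) x ∂μ :=
        setIntegral_condExp hm' ((integrable_const 1).indicator ((hm₁ _ ht₁).inter ht₂')) hu
    _ = ∫ x in u ∩ t₂, t₁.indicator (fun _ => 1) x ∂μ := by
        rw [Set.inter_comm, ← Set.indicator_indicator, setIntegral_indicator ht₂']

lemma condExp_indicator_sup_eq (h : CondIndep m' m₁ m₂ hm' μ) (hm₁ : m₁ ≤ mΩ)
    (hm₂ : m₂ ≤ mΩ) {t₁ : Set Ω} (ht₁ : MeasurableSet[m₁] t₁) :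
    μ⟦t₁ | m' ⊔ m₂⟧ =ᵐ[μ] μ⟦t₁ | m'⟧ := by
  have hf : Integrable (t₁.indicator fun _ => (1 : ℝ)) μ :=
    (integrable_const 1).indicator (hm₁ _ ht₁)
  refine (ae_eq_condExp_of_forall_setIntegral_eq (sup_le hm' hm₂) hf
    (fun _ _ _ => integrable_condExp.integrableOn) (fun s hs _ => ?_)
    (stronglyMeasurable_condExp.mono (le_sup_left (a := m') (b := m₂))).aestronglyMeasurable).symm
  refine setIntegral_eq_of_isPiSystem (sup_le hm' hm₂)
    (MeasurableSpace.sup_eq_generateFrom_image2_inter_s9 m' m₂)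
    (MeasurableSpace.isPiSystem_image2_inter m' m₂) integrable_condExp hf ?_
    (integral_condExp hm') hs
  rintro _ ⟨u, hu, t₂, ht₂, rfl⟩
  exact h.setIntegral_inter_condExp_indicator hm₁ hm₂ ht₁ hu ht₂

variable {n : MeasurableSpace Ω}

lemma condExp_indicator_eq_of_le_sup (h : CondIndep m' m₁ m₂ hm' μ) (hm₁ : m₁ ≤ mΩ)
    (hm₂ : m₂ ≤ mΩ) (hm'n : m' ≤ n) (hn : n ≤ m' ⊔ m₂) {t₁ : Set Ω}
    (ht₁ : MeasurableSet[m₁] t₁) : μ⟦t₁ | n⟧ =ᵐ[μ] μ⟦t₁ | m'⟧ :=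
  have hsup : m' ⊔ m₂ ≤ mΩ := sup_le hm' hm₂
  calc μ⟦t₁ | n⟧
      =ᵐ[μ] μ[μ⟦t₁ | m' ⊔ m₂⟧ | n] := (condExp_condExp_of_le hn hsup).symm
    _ =ᵐ[μ] μ[μ⟦t₁ | m'⟧ | n] := condExp_congr_ae (h.condExp_indicator_sup_eq hm₁ hm₂ ht₁)
    _ = μ⟦t₁ | m'⟧ := condExp_of_stronglyMeasurable (hn.trans hsup)
        (stronglyMeasurable_condExp.mono hm'n) integrable_condExp

theorem of_le_of_le_sup (h : CondIndep m' m₁ m₂ hm' μ) (hm₁ : m₁ ≤ mΩ) (hm₂ : m₂ ≤ mΩ)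
    (hm'n : m' ≤ n) (hn : n ≤ m' ⊔ m₂) : CondIndep n m₁ m₂ (hn.trans (sup_le hm' hm₂)) μ := by
  have hsup : m' ⊔ m₂ ≤ mΩ := sup_le hm' hm₂
  rw [condIndep_iff _ _ _ _ hm₁ hm₂]
  intro t₁ t₂ ht₁ ht₂
  have ht₂' : MeasurableSet[m' ⊔ m₂] t₂ := le_sup_right (a := m') _ ht₂
  have hf : Integrable (t₁.indicator fun _ => (1 : ℝ)) μ :=
    (integrable_const 1).indicator (hm₁ _ ht₁)
  calc μ⟦t₁ ∩ t₂ | n⟧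
      =ᵐ[μ] μ[μ[t₂.indicator (t₁.indicator fun _ => 1) | m' ⊔ m₂] | n] := by
        rw [Set.indicator_indicator, Set.inter_comm]
        exact (condExp_condExp_of_le hn hsup).symm
    _ =ᵐ[μ] μ[t₂.indicator (μ⟦t₁ | m'⟧) | n] := condExp_congr_ae <|
        (condExp_indicator hf ht₂').trans
          ((h.condExp_indicator_sup_eq hm₁ hm₂ ht₁).indicator)
    _ =ᵐ[μ] μ⟦t₁ | m'⟧ * μ⟦t₂ | n⟧ :=
        condExp_indicator_eq_mul_condExp_indicator_one (stronglyMeasurable_condExp.mono hm'n)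
          integrable_condExp (hm₂ _ ht₂)
    _ =ᵐ[μ] μ⟦t₁ | n⟧ * μ⟦t₂ | n⟧ :=
        (h.condExp_indicator_eq_of_le_sup hm₁ hm₂ hm'n hn ht₁).symm.mul .rfl

end ProbabilityTheory.CondIndep

section famAlg

variable {Ω ι : Type*} (V : ι → Ω → ℝ)

lemma famAlg_union (A B : Set ι) : famAlg V (A ∪ B) = famAlg V A ⊔ famAlg V B :=
  iSup_union

lemma famAlg_mono {A B : Set ι} (hAB : A ⊆ B) : famAlg V A ≤ famAlg V B :=
  biSup_mono hAB

lemma comap_le_famAlg {B : Set ι} {x : ι} (hx : x ∈ B) :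
    MeasurableSpace.comap (V x) inferInstance ≤ famAlg V B :=
  le_biSup (fun j => MeasurableSpace.comap (V j) inferInstance) hx

end famAlg

theorem backward_removes_nonMB_general {Ω ι : Type*} {mΩ : MeasurableSpace Ω}
    [StandardBorelSpace Ω] (μ : Measure Ω) [IsProbabilityMeasure μ]
    (T : Ω → ℝ) (V : ι → Ω → ℝ) (hT : Measurable T) (hV : ∀ i, Measurable (V i))
    (M S : Set ι) (hMS : M ⊆ S)
    (h : CondIndepSetFam μ T V hV (S \ M) M) :
    (∀ W, M ⊆ W → W ⊆ S → ∀ x ∈ W \ M, CondIndepVarFam μ T V hV x (W \ {x})) ∧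
    (∀ (k : ℕ) (x : Fin k → ι), Function.Injective x → Set.range x = S \ M →
      ∀ m : Fin k,
        CondIndepVarFam μ T V hV (x m) ((S \ (x '' {j | j < m})) \ {x m})) := by
  have removable : ∀ W, M ⊆ W → W ⊆ S → ∀ x ∈ W \ M,
      CondIndepVarFam μ T V hV x (W \ {x}) := by
    rintro W hMW hWS x ⟨hxW, hxM⟩
    have hM : M ⊆ W \ {x} := fun y hy => ⟨hMW hy, by rintro rfl; exact hxM hy⟩
    have hS : W \ {x} ⊆ M ∪ S \ M := by
      rw [Set.union_sdiff_cancel hMS]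
      exact Set.sdiff_subset.trans hWS
    have h_weak := h.of_le_of_le_sup hT.comap_le (famAlg_le hV _) (famAlg_mono V hM)
      ((famAlg_mono V hS).trans (famAlg_union V M (S \ M)).le)
    exact condIndep_of_condIndep_of_le_right h_weak (comap_le_famAlg V ⟨hWS hxW, hxM⟩)
  refine ⟨removable, fun k x hinj hrange m => removable _ ?_ Set.sdiff_subset _ ?_⟩
  · have hremoved : x '' {j | j < m} ⊆ S \ M := hrange ▸ Set.image_subset_range x _
    exact fun y hy => ⟨hMS hy, fun hy' => (hremoved hy').2 hy⟩
  · have hxm : x m ∈ S \ M := hrange ▸ Set.mem_range_self m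
    refine ⟨⟨hxm.1, ?_⟩, hxm.2⟩
    rintro ⟨j, hj, hjm⟩
    exact (hinj hjm ▸ hj : m < m).false

/-- Removability of all non-Markov-blanket variables during the backward phase (claim in the
proofs of Theorems 3 and 4): if `M ⊆ S` and `T ⫫ (S \ M) | M`, then for every `W` with
`M ⊆ W ⊆ S` and every `x ∈ W \ M`, `T ⫫ V x | W \ {x}`; in particular, backward elimination
started from `S` can successively remove all indices of `S \ M` in any order. -/
theorem backward_removes_nonMB {Ω ι : Type*} {mΩ : MeasurableSpace Ω}
    [StandardBorelSpace Ω] [Fintype ι] (μ : Measure Ω) [IsProbabilityMeasure μ]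
    (T : Ω → ℝ) (V : ι → Ω → ℝ) (hT : Measurable T) (hV : ∀ i, Measurable (V i))
    (M S : Set ι) (hMS : M ⊆ S)
    (h : CondIndepSetFam μ T V hV (S \ M) M) :
    (∀ W, M ⊆ W → W ⊆ S → ∀ x ∈ W \ M, CondIndepVarFam μ T V hV x (W \ {x})) ∧
    (∀ (k : ℕ) (x : Fin k → ι), Function.Injective x → Set.range x = S \ M →
      ∀ m : Fin k,
        CondIndepVarFam μ T V hV (x m) ((S \ (x '' {j | j < m})) \ {x m})) :=
  backward_removes_nonMB_general (mΩ := mΩ) μ T V hT hV M S hMS h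
end
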